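/- Let f: ℝⁿ → ℂ be a Schwartz function and λ ∈ ℂ, ρ = n/2. Define the operator 𝔅_j f(ξ) = ξ_j Δf(ξ) − 2(E − λ + ρ)∂_j f(ξ), where E is the Euler operator and Δ the Laplacian. Then ℱ(‖x‖² ∂_j g − 2x_j (E_x + λ + ρ) g)(ξ) = −i 𝔅_j (ℱ g)(ξ) for Schwartz g, where E_x = Σ_k x_k ∂_{x_k}. -/

import Mathlib

open MeasureTheory

/-- The partial derivative `∂_j` on functions `ℝⁿ → ℂ`. -/
noncomputable def pd {n : ℕ} (j : Fin n) (f : (Fin n → ℝ) → ℂ) : (Fin n → ℝ) → ℂ :=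
  fun ξ => fderiv ℝ f ξ (Pi.single j 1)

/-- The Euler operator `E = Σ_k ξ_k ∂_k`. -/
noncomputable def eulerOp {n : ℕ} (f : (Fin n → ℝ) → ℂ) : (Fin n → ℝ) → ℂ :=
  fun ξ => ∑ k, (ξ k : ℂ) * pd k f ξ

/-- The Laplacian `Δ = Σ_k ∂_k²`. -/
noncomputable def lapOp {n : ℕ} (f : (Fin n → ℝ) → ℂ) : (Fin n → ℝ) → ℂ :=
  fun ξ => ∑ k, pd k (pd k f) ξ

/-- The Euclidean Fourier transform `ℱ(f)(ξ) = (2π)^{−n/2} ∫ e^{−i⟨x,ξ⟩} f(x) dx`. -/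
noncomputable def FT {n : ℕ} (f : (Fin n → ℝ) → ℂ) : (Fin n → ℝ) → ℂ :=
  fun ξ => (((2 * Real.pi) ^ (-(n : ℝ) / 2) : ℝ) : ℂ) *
    ∫ x : Fin n → ℝ, Complex.exp (-Complex.I * (∑ k, x k * ξ k : ℝ)) * f x

/-!
The Fourier transform turns `∂_k` into multiplication by `i ξ_k` and multiplication by `x_k` into
`i ∂_k`. Using `[∂_k, x_l] = δ_{kl}`, the operator is rewritten in divergence form
`‖x‖² ∂_j - 2 x_j (E + λ + ρ) = ∑_k ∂_j x_k² - 2 ∑_k ∂_k x_k x_j + (n - 2λ) x_j`,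
whose Fourier transform is read off term by term; the same three Fourier integrals
`ℱ(x_k² g)`, `ℱ(x_k x_j g)`, `ℱ(x_j g)` appear when `𝔅_j (ℱ g)` is expanded.
-/

open Complex MeasureTheory SchwartzMap VectorFourier LineDeriv FourierTransform

namespace FourierNAction

variable {n : ℕ}

/-- Since `𝐞 t = exp (2πit)`, `FT` is a multiple of the Fourier integral for the pairing
`(2π)⁻¹ ⟨x, ξ⟩`. -/
noncomputable def fourierPairing (n : ℕ) : (Fin n → ℝ) →L[ℝ] (Fin n → ℝ) →L[ℝ] ℝ :=
  (2 * Real.pi)⁻¹ • ∑ k : Fin n, .smulRight (.proj k) (.proj k)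

theorem fourierPairing_apply (x ξ : Fin n → ℝ) :
    fourierPairing n x ξ = (2 * Real.pi)⁻¹ * ∑ k, x k * ξ k := by
  simp [fourierPairing, Finset.mul_sum]

theorem fourierPairing_flip : (fourierPairing n).flip = fourierPairing n := by
  ext x ξ
  simp [fourierPairing_apply, mul_comm]

theorem two_pi_mul_fourierPairing_single (x : Fin n → ℝ) (k : Fin n) :
    (2 * Real.pi : ℂ) * (fourierPairing n x (Pi.single k 1) : ℂ) = x k := by
  have : (Real.pi : ℂ) ≠ 0 := ofReal_ne_zero.2 Real.pi_ne_zero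
  simp only [fourierPairing_apply, Pi.single_apply, mul_ite, mul_one, mul_zero,
    Finset.sum_ite_eq', Finset.mem_univ, if_true]
  push_cast
  field_simp

theorem FT_eq_fourierIntegral (f : (Fin n → ℝ) → ℂ) (ξ : Fin n → ℝ) :
    FT f ξ = (((2 * Real.pi) ^ (-(n : ℝ) / 2) : ℝ) : ℂ) *
      fourierIntegral 𝐞 volume (fourierPairing n).toLinearMap₁₂ f ξ := by
  refine congrArg _ (integral_congr_ae (.of_forall fun x => ?_))
  have : (2 * Real.pi) ≠ 0 := by positivity
  simp only [Circle.smul_def, Real.fourierChar_apply,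
    ContinuousLinearMap.toLinearMap₁₂_apply_apply_apply, fourierPairing_apply, smul_eq_mul]
  congr 2
  push_cast
  field_simp

theorem integrable_norm_mul (f : 𝓢(Fin n → ℝ, ℂ)) :
    Integrable (fun x => ‖x‖ * ‖f x‖) := by
  simpa using f.integrable_pow_mul volume 1

theorem integrable_fourierSMulRight (f : 𝓢(Fin n → ℝ, ℂ)) :
    Integrable (fourierSMulRight (fourierPairing n) f) := by
  refine ((integrable_norm_mul f).const_mul (2 * Real.pi * ‖fourierPairing n‖)).mono'
    f.continuous.aestronglyMeasurable.fourierSMulRight (.of_forall fun x => ?_)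
  simpa only [mul_assoc] using norm_fourierSMulRight_le (fourierPairing n) f x

noncomputable def schwartzFT (n : ℕ) : 𝓢(Fin n → ℝ, ℂ) →ₗ[ℂ] (Fin n → ℝ) → ℂ where
  toFun f := FT f
  map_add' f g := by
    ext ξ
    have hL : Continuous fun p : (Fin n → ℝ) × (Fin n → ℝ) => fourierPairing n p.1 p.2 :=
      (fourierPairing n).continuous₂
    rw [Pi.add_apply, FT_eq_fourierIntegral, FT_eq_fourierIntegral, FT_eq_fourierIntegral,
      ← mul_add, ← Pi.add_apply (fourierIntegral _ _ _ f),
      ← fourierIntegral_add Real.continuous_fourierChar hL f.integrable g.integrable]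
    rfl
  map_smul' c f := by
    ext ξ
    rw [Pi.smul_apply, FT_eq_fourierIntegral, FT_eq_fourierIntegral, smul_eq_mul,
      RingHom.id_apply, mul_left_comm, ← smul_eq_mul c, ← Pi.smul_apply c,
      ← fourierIntegral_const_smul]
    rfl

theorem schwartzFT_apply (f : 𝓢(Fin n → ℝ, ℂ)) : schwartzFT n f = FT f := rfl

noncomputable def coordCLM (k : Fin n) : (Fin n → ℝ) →L[ℝ] ℂ :=
  ofRealCLM.comp (.proj k)

theorem coordCLM_apply (k : Fin n) (x : Fin n → ℝ) : coordCLM k x = x k := rfl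

noncomputable def coordMul (k : Fin n) : 𝓢(Fin n → ℝ, ℂ) →L[ℂ] 𝓢(Fin n → ℝ, ℂ) :=
  smulLeftCLM ℂ (coordCLM k)

theorem coordMul_apply (k : Fin n) (f : 𝓢(Fin n → ℝ, ℂ)) (x : Fin n → ℝ) :
    coordMul k f x = x k * f x := by
  simp [coordMul, (coordCLM k).hasTemperateGrowth, coordCLM_apply]

theorem pd_FT (k : Fin n) (f : 𝓢(Fin n → ℝ, ℂ)) : pd k (FT f) = FT (-I • coordMul k f) := by
  ext ξ
  have hFT : FT f = fun ξ => (((2 * Real.pi) ^ (-(n : ℝ) / 2) : ℝ) : ℂ) *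
      fourierIntegral 𝐞 volume (fourierPairing n).toLinearMap₁₂ f ξ :=
    funext (FT_eq_fourierIntegral f)
  have hderiv := (hasFDerivAt_fourierIntegral (fourierPairing n) f.integrable
    (integrable_norm_mul f) ξ).const_mul (((2 * Real.pi) ^ (-(n : ℝ) / 2) : ℝ) : ℂ)
  have hintegrand : (fun x => fourierSMulRight (fourierPairing n) f x (Pi.single k 1)) =
      ⇑(-I • coordMul k f) := by
    ext x
    rw [fourierSMulRight_apply, smul_apply, coordMul_apply, real_smul,
      smul_eq_mul, smul_eq_mul, ← two_pi_mul_fourierPairing_single]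
    ring
  rw [pd, hFT, hderiv.fderiv, smul_apply,
    Real.fourierIntegral_continuousLinearMap_apply' (integrable_fourierSMulRight f), hintegrand,
    FT_eq_fourierIntegral, smul_eq_mul]

theorem FT_lineDerivOp (m : Fin n) (f : 𝓢(Fin n → ℝ, ℂ)) (ξ : Fin n → ℝ) :
    FT (∂_{(Pi.single m 1 : Fin n → ℝ)} f : 𝓢(Fin n → ℝ, ℂ)) ξ = I * ξ m * FT f ξ := by
  have hf' : Integrable (fderiv ℝ f) := (fderivCLM ℝ (Fin n → ℝ) ℂ f).integrable
  have hderiv := fourierIntegral_fderiv (fourierPairing n) f.integrable f.differentiable hf'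
  rw [FT_eq_fourierIntegral, FT_eq_fourierIntegral]
  change _ * fourierIntegral _ _ _ (fun x => fderiv ℝ f x (Pi.single m 1)) ξ = _
  rw [← Real.fourierIntegral_continuousLinearMap_apply' hf', hderiv, fourierSMulRight_apply,
    neg_apply, fourierPairing_flip, neg_apply,
    real_smul, smul_eq_mul, ofReal_neg, ← two_pi_mul_fourierPairing_single ξ m]
  ring

theorem pd_coordMul (m l : Fin n) (f : 𝓢(Fin n → ℝ, ℂ)) (x : Fin n → ℝ) :
    pd m (coordMul l f) x = x l * pd m f x + if l = m then f x else 0 := by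
  rw [pd, show ⇑(coordMul l f) = fun y => coordCLM l y * f y from funext (coordMul_apply l f),
    ((coordCLM l).hasFDerivAt.fun_mul f.differentiableAt.hasFDerivAt).fderiv]
  simp only [add_apply, smul_apply, smul_eq_mul, coordCLM_apply, Pi.single_apply, pd]
  split_ifs <;> simp

theorem pd_pd_FT (k l : Fin n) (f : 𝓢(Fin n → ℝ, ℂ)) :
    pd k (pd l (FT f)) = -FT (coordMul k (coordMul l f)) := by
  rw [pd_FT, pd_FT, ← schwartzFT_apply, ← schwartzFT_apply, map_smul, map_smul, map_smul,
    smul_smul]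
  simp

theorem lineDerivOp_single_apply (k : Fin n) (f : 𝓢(Fin n → ℝ, ℂ)) (x : Fin n → ℝ) :
    (∂_{(Pi.single k 1 : Fin n → ℝ)} f : 𝓢(Fin n → ℝ, ℂ)) x = pd k f x := rfl

/-- `dπ_{σ,λ}(N_j)` for trivial `σ`, in the non-compact picture. -/
noncomputable def nAction (lam : ℂ) (j : Fin n) (g : (Fin n → ℝ) → ℂ) : (Fin n → ℝ) → ℂ :=
  fun x => (∑ k, ((x k : ℂ)) ^ 2) * pd j g x
    - 2 * (x j : ℂ) * (eulerOp g x + (lam + (n : ℂ) / 2) * g x)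

/-- The operator `𝔅_j`, with `ρ = n / 2`. -/
noncomputable def bOp (lam : ℂ) (j : Fin n) (F : (Fin n → ℝ) → ℂ) : (Fin n → ℝ) → ℂ :=
  fun ξ => (ξ j : ℂ) * lapOp F ξ - 2 * (eulerOp (pd j F) ξ + (-lam + (n : ℂ) / 2) * pd j F ξ)

theorem nAction_eq_divergence_form (lam : ℂ) (j : Fin n) (g : 𝓢(Fin n → ℝ, ℂ)) :
    nAction lam j g = ⇑(∑ k, ∂_{(Pi.single j 1 : Fin n → ℝ)} (coordMul k (coordMul k g))
      - (2 : ℂ) • ∑ k, ∂_{(Pi.single k 1 : Fin n → ℝ)} (coordMul k (coordMul j g))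
      + ((n : ℂ) - 2 * lam) • coordMul j g) := by
  ext x
  have hjk (k : Fin n) : pd j (coordMul k (coordMul k g)) x =
      (x k : ℂ) ^ 2 * pd j g x + 2 * if k = j then (x j : ℂ) * g x else 0 := by
    rw [pd_coordMul, pd_coordMul, coordMul_apply]
    split_ifs with h
    · subst h; ring
    · ring
  have hkk (k : Fin n) : pd k (coordMul k (coordMul j g)) x =
      (x j : ℂ) * ((x k : ℂ) * pd k g x) + (x j : ℂ) * g x
        + if j = k then (x j : ℂ) * g x else 0 := by
    rw [pd_coordMul, pd_coordMul, coordMul_apply, if_pos rfl]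
    split_ifs with h
    · subst h; ring
    · ring
  simp only [add_apply, sub_apply, smul_apply, sum_apply, lineDerivOp_single_apply, hjk, hkk,
    coordMul_apply, smul_eq_mul, Finset.sum_add_distrib, ← Finset.sum_mul, ← Finset.mul_sum,
    Finset.sum_ite_eq', Finset.sum_ite_eq, Finset.mem_univ, if_true, Finset.sum_const,
    Finset.card_univ, Fintype.card_fin, nsmul_eq_mul, nAction, eulerOp]
  ring

theorem FT_nAction (lam : ℂ) (j : Fin n) (g : 𝓢(Fin n → ℝ, ℂ)) (ξ : Fin n → ℝ) :
    FT (nAction lam j g) ξ =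
      I * ξ j * ∑ k, FT (coordMul k (coordMul k g)) ξ
        - 2 * I * ∑ k, ξ k * FT (coordMul k (coordMul j g)) ξ
        + ((n : ℂ) - 2 * lam) * FT (coordMul j g) ξ := by
  rw [nAction_eq_divergence_form, ← schwartzFT_apply]
  simp only [map_add, map_sub, map_smul, map_sum, Pi.add_apply, Pi.sub_apply, Pi.smul_apply,
    Finset.sum_apply, schwartzFT_apply, FT_lineDerivOp, smul_eq_mul, Finset.mul_sum]
  congr 2
  exact Finset.sum_congr rfl fun k _ => by ring

theorem bOp_FT (lam : ℂ) (j : Fin n) (g : 𝓢(Fin n → ℝ, ℂ)) (ξ : Fin n → ℝ) :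
    bOp lam j (FT g) ξ =
      -(ξ j * ∑ k, FT (coordMul k (coordMul k g)) ξ)
        + 2 * ∑ k, ξ k * FT (coordMul k (coordMul j g)) ξ
        + 2 * I * (-lam + n / 2) * FT (coordMul j g) ξ := by
  simp only [bOp, lapOp, eulerOp, pd_pd_FT]
  rw [pd_FT, ← schwartzFT_apply, map_smul]
  simp only [schwartzFT_apply, Pi.neg_apply, Pi.smul_apply, smul_eq_mul, Finset.sum_neg_distrib,
    mul_neg]
  ring

end FourierNAction

open FourierNAction in
/-- `ℱ(‖x‖² ∂_j g − 2x_j (E + λ + ρ)g)(ξ) = −i 𝔅_j(ℱg)(ξ)` where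
`𝔅_j f = ξ_j Δf − 2(E − λ + ρ)∂_j f` and `ρ = n/2`. -/
theorem fourier_of_N_action (n : ℕ) (lam : ℂ) (j : Fin n)
    (g : SchwartzMap (Fin n → ℝ) ℂ) (ξ : Fin n → ℝ) :
    FT (fun x => (∑ k, ((x k : ℂ)) ^ 2) * pd j g x
        - 2 * (x j : ℂ) * (eulerOp g x + (lam + (n : ℂ) / 2) * g x)) ξ
      = -Complex.I * ((ξ j : ℂ) * lapOp (FT g) ξ
          - 2 * (eulerOp (pd j (FT g)) ξ + (-lam + (n : ℂ) / 2) * pd j (FT g) ξ)) := by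
  change FT (nAction lam j g) ξ = -I * bOp lam j (FT g) ξ
  rw [FT_nAction, bOp_FT]
  linear_combination ((n : ℂ) - 2 * lam) * FT (coordMul j g) ξ * I_sq
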